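/- arXiv:1808.02170 — 7 statements merged into one kernel-verified Lean document; each statement's English description precedes it below -/
import Mathlib

section
/- For 0 < α ≤ 1 and θ ∈ (0, π), the imaginary part of (1 - e^{iθ})^α · (1 + α/2 - (α/2) e^{iθ}) is strictly negative, where (·)^α denotes the principal branch of the power. -/
open Complex

/-!
Write `1 - e^{iθ} = 2 sin(θ/2) e^{iψ}` with `ψ = (θ - π)/2 ∈ (-π/2, 0)`. Then
`(1 - e^{iθ})^α = (2 sin(θ/2))^α e^{iαψ}`, and the imaginary part of the product is
`(2 sin(θ/2))^α [(1 + α/2 - (α/2) cos θ) sin(αψ) - (α/2) cos(αψ) sin θ]`.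
Since `αψ ∈ (-π/2, 0)` for `0 < α ≤ 1`, the bracket is a negative term minus a positive one.
-/

theorem Complex.one_sub_exp_ofReal_mul_I (θ : ℝ) :
    1 - exp (θ * I) = ↑(2 * Real.sin (θ / 2)) * exp (↑((θ - Real.pi) / 2) * I) := by
  obtain ⟨x, rfl⟩ : ∃ x, θ = 2 * x := ⟨θ / 2, by ring⟩
  apply Complex.ext <;>
    simp only [sub_re, sub_im, one_re, one_im, mul_re, mul_im, ofReal_re, ofReal_im,
      exp_ofReal_mul_I_re, exp_ofReal_mul_I_im, sub_div, mul_div_cancel_left₀ x two_ne_zero,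
      Real.cos_sub_pi_div_two, Real.sin_sub_pi_div_two, Real.cos_two_mul_eq_one_sub,
      Real.sin_two_mul] <;>
    ring

theorem Complex.ofReal_mul_exp_mul_I_cpow {r ψ : ℝ} (hr : 0 < r)
    (hψ : ψ ∈ Set.Ioc (-Real.pi) Real.pi) (w : ℂ) :
    (r * exp (ψ * I)) ^ w = (r : ℂ) ^ w * exp (ψ * I * w) := by
  have hr' : (r : ℂ) ≠ 0 := ofReal_ne_zero.mpr hr.ne'
  rw [cpow_def_of_ne_zero (mul_ne_zero hr' (exp_ne_zero _)), log_ofReal_mul hr (exp_ne_zero _),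
    log_exp (by simpa using hψ.1) (by simpa using hψ.2), ofReal_log hr.le, add_mul, exp_add,
    ← cpow_def_of_ne_zero hr']

theorem Complex.im_ofReal_mul_exp_mul_I_mul (R φ c d θ : ℝ) :
    (R * exp (φ * I) * (c - d * exp (θ * I))).im
      = R * ((c - d * Real.cos θ) * Real.sin φ - d * Real.cos φ * Real.sin θ) := by
  simp only [mul_im, mul_re, sub_im, sub_re, ofReal_re, ofReal_im, exp_ofReal_mul_I_re,
    exp_ofReal_mul_I_im]
  ring

theorem mul_half_sub_pi_mem_Ioo {α θ : ℝ} (hα0 : 0 < α) (hα1 : α ≤ 1)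
    (hθ : θ ∈ Set.Ioo 0 Real.pi) :
    α * ((θ - Real.pi) / 2) ∈ Set.Ioo (-(Real.pi / 2)) 0 := by
  obtain ⟨hθ0, hθπ⟩ := hθ
  have hψ_neg : (θ - Real.pi) / 2 < 0 := by linarith
  exact ⟨by linarith [mul_le_mul_of_nonpos_right hα1 hψ_neg.le],
    mul_neg_of_pos_of_neg hα0 hψ_neg⟩

/-- For 0 < α ≤ 1, θ ∈ (0,π), Im((1 - e^{iθ})^α (1 + α/2 - (α/2)e^{iθ})) < 0. -/
theorem W2_neg_upper (α θ : ℝ) (hα0 : 0 < α) (hα1 : α ≤ 1)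
    (hθ : θ ∈ Set.Ioo (0 : ℝ) Real.pi) :
    ((1 - Complex.exp (θ * I)) ^ (α : ℂ) *
        (1 + α / 2 - (α / 2) * Complex.exp (θ * I))).im < 0 := by
  obtain ⟨hφ_gt, hφ_neg⟩ := mul_half_sub_pi_mem_Ioo hα0 hα1 hθ
  obtain ⟨hθ0, hθπ⟩ := hθ
  have hr : 0 < 2 * Real.sin (θ / 2) :=
    mul_pos two_pos (Real.sin_pos_of_pos_of_lt_pi (by linarith) (by linarith))
  have hψ : (θ - Real.pi) / 2 ∈ Set.Ioc (-Real.pi) Real.pi := ⟨by linarith, by linarith⟩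
  have hpolar : (1 - exp (θ * I)) ^ (α : ℂ) * (1 + α / 2 - (α / 2) * exp (θ * I))
      = ↑((2 * Real.sin (θ / 2)) ^ α) * exp (↑(α * ((θ - Real.pi) / 2)) * I)
          * (↑(1 + α / 2) - ↑(α / 2) * exp (θ * I)) := by
    rw [one_sub_exp_ofReal_mul_I, ofReal_mul_exp_mul_I_cpow hr hψ, ofReal_cpow hr.le]
    push_cast
    ring_nf
  rw [hpolar, im_ofReal_mul_exp_mul_I_mul]
  refine mul_neg_of_pos_of_neg (by positivity) ?_
  have hsinφ := Real.sin_neg_of_neg_of_neg_pi_lt hφ_neg (by linarith)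
  have hcosφ := Real.cos_pos_of_mem_Ioo ⟨hφ_gt, by linarith⟩
  have hsinθ := Real.sin_pos_of_pos_of_lt_pi hθ0 hθπ
  have hcoef : 0 < 1 + α / 2 - α / 2 * Real.cos θ := by nlinarith [Real.cos_le_one θ]
  linarith [mul_neg_of_pos_of_neg hcoef hsinφ, mul_pos (mul_pos (half_pos hα0) hcosφ) hsinθ]
end

section
/- For 0 < α ≤ 1 and θ ∈ (-π, 0), the imaginary part of (1 - e^{iθ})^α · (1 + α/2 - (α/2) e^{iθ}) is strictly positive, where (·)^α denotes the principal branch of the power. -/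
/-!
Write `z = 1 - e^{iθ}`; for `θ ∈ (-π, 0)` it lies in the open first quadrant. Hence so does
`z ^ α` for `0 < α ≤ 1` (its argument is `α arg z ∈ (0, π/2)`), and so does the second factor,
which equals `1 + (α/2) z`. A product of two numbers in the open first quadrant has positive
imaginary part.
-/

open Complex

namespace Complex

lemma arg_mem_Ioo_of_re_pos_of_im_pos {z : ℂ} (hre : 0 < z.re) (him : 0 < z.im) :
    arg z ∈ Set.Ioo 0 (Real.pi / 2) := by
  refine ⟨lt_of_le_of_ne (arg_nonneg_iff.2 him.le) fun h => ?_,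
    arg_lt_pi_div_two_iff.2 (Or.inl hre)⟩
  exact him.ne' (arg_eq_zero_iff.1 h.symm).2

variable {z : ℂ} {α : ℝ}

lemma cpow_ofReal_re_pos (hre : 0 < z.re) (him : 0 < z.im) (hα0 : 0 ≤ α) (hα1 : α ≤ 1) :
    0 < (z ^ (α : ℂ)).re := by
  obtain ⟨harg0, harg⟩ := arg_mem_Ioo_of_re_pos_of_im_pos hre him
  have hz : 0 < ‖z‖ := norm_pos_iff.2 fun h => by simp [h] at hre
  rw [cpow_ofReal_re]
  refine mul_pos (Real.rpow_pos_of_pos hz α) (Real.cos_pos_of_mem_Ioo ⟨?_, ?_⟩) <;>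
    nlinarith [Real.pi_pos]

lemma cpow_ofReal_im_pos (hre : 0 < z.re) (him : 0 < z.im) (hα0 : 0 < α) (hα1 : α ≤ 1) :
    0 < (z ^ (α : ℂ)).im := by
  obtain ⟨harg0, harg⟩ := arg_mem_Ioo_of_re_pos_of_im_pos hre him
  rw [cpow_ofReal_im]
  refine mul_pos (Real.rpow_pos_of_pos (norm_pos_iff.2 fun h => by simp [h] at hre) α)
    (Real.sin_pos_of_pos_of_lt_pi (mul_pos harg0 hα0) ?_)
  nlinarith [Real.pi_pos]

lemma im_mul_pos {a b : ℂ} (ha_re : 0 ≤ a.re) (ha_im : 0 < a.im) (hb_re : 0 < b.re)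
    (hb_im : 0 ≤ b.im) : 0 < (a * b).im := by
  rw [mul_im]
  nlinarith

end Complex

/-- For 0 < α ≤ 1, θ ∈ (-π,0), Im((1 - e^{iθ})^α (1 + α/2 - (α/2)e^{iθ})) > 0. -/
theorem W2_pos_lower (α θ : ℝ) (hα0 : 0 < α) (hα1 : α ≤ 1)
    (hθ : θ ∈ Set.Ioo (-Real.pi) (0 : ℝ)) :
    0 < ((1 - Complex.exp (θ * I)) ^ (α : ℂ) *
        (1 + α / 2 - (α / 2) * Complex.exp (θ * I))).im := by
  obtain ⟨hθ₁, hθ₂⟩ := hθ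
  have hsin : Real.sin θ < 0 := Real.sin_neg_of_neg_of_neg_pi_lt hθ₂ hθ₁
  have hcos : Real.cos θ < 1 := (Real.cos_le_one θ).lt_of_ne fun h => by
    nlinarith [Real.sin_sq_add_cos_sq θ]
  set z := 1 - exp (θ * I) with hz
  have hz_re : 0 < z.re := by simpa [hz, exp_ofReal_mul_I_re] using hcos
  have hz_im : 0 < z.im := by simpa [hz, exp_ofReal_mul_I_im] using hsin
  have hfactor : 1 + α / 2 - (α / 2) * exp (θ * I) = 1 + ((α / 2 : ℝ) : ℂ) * z := by
    push_cast
    ring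
  rw [hfactor]
  refine im_mul_pos (cpow_ofReal_re_pos hz_re hz_im hα0.le hα1).le
    (cpow_ofReal_im_pos hz_re hz_im hα0 hα1) ?_ ?_
  · simp only [add_re, one_re, re_ofReal_mul]
    positivity
  · simp only [add_im, one_im, im_ofReal_mul]
    positivity
end

section
/- For 0 < α ≤ 1 and θ ∈ (-π, 0), one has (1 + α/2 - (α/2) cos θ) · sin((α/2)(θ + π)) - (α/2) · cos((α/2)(θ + π)) · sin θ > 0. -/
/-! With `φ = (α/2)(θ + π) ∈ (0, π/2]`, the bracket is
`(1 + (α/2)(1 - cos θ)) sin φ + (α/2) cos φ (-sin θ)`: a positive term plus a nonnegative one. -/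

open Real Set

theorem one_add_sub_mul_cos_mul_sin_sub_pos {a φ θ : ℝ} (ha : 0 ≤ a) (hφ : φ ∈ Ioc 0 (π / 2))
    (hθ : θ ∈ Icc (-π) 0) :
    0 < (1 + a - a * cos θ) * sin φ - a * cos φ * sin θ := by
  have hsinφ : 0 < sin φ := sin_pos_of_pos_of_lt_pi hφ.1 (by linarith [hφ.2, pi_pos])
  have hcosφ : 0 ≤ cos φ := cos_nonneg_of_mem_Icc ⟨by linarith [hφ.1, pi_pos], hφ.2⟩
  have hsinθ : 0 ≤ -sin θ := neg_nonneg.2 (sin_nonpos_of_nonpos_of_neg_pi_le hθ.2 hθ.1)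
  have hfac : 1 ≤ 1 + a - a * cos θ := by nlinarith [cos_le_one θ]
  have hfirst : sin φ ≤ (1 + a - a * cos θ) * sin φ := le_mul_of_one_le_left hsinφ.le hfac
  have hsecond : 0 ≤ a * cos φ * -sin θ := by positivity
  linarith

theorem half_mul_add_pi_mem_Ioc {α θ : ℝ} (hα0 : 0 < α) (hα1 : α ≤ 1) (hθ : θ ∈ Ioo (-π) 0) :
    α / 2 * (θ + π) ∈ Ioc 0 (π / 2) := by
  obtain ⟨hθπ, hθ0⟩ := hθ
  have hpos : 0 < θ + π := by linarith
  refine ⟨by positivity, ?_⟩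
  nlinarith [pi_pos]

/-- The trigonometric inequality on the lower semicircle:
(1 + α/2 - (α/2)cos θ) sin((α/2)(θ+π)) - (α/2) cos((α/2)(θ+π)) sin θ > 0
for 0 < α ≤ 1 and θ ∈ (-π, 0). -/
theorem trig_bracket_pos (α θ : ℝ) (hα0 : 0 < α) (hα1 : α ≤ 1)
    (hθ : θ ∈ Set.Ioo (-Real.pi) (0 : ℝ)) :
    0 < (1 + α / 2 - (α / 2) * Real.cos θ) * Real.sin ((α / 2) * (θ + Real.pi))
        - (α / 2) * Real.cos ((α / 2) * (θ + Real.pi)) * Real.sin θ :=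
  one_add_sub_mul_cos_mul_sin_sub_pos (by positivity) (half_mul_add_pi_mem_Ioc hα0 hα1 hθ)
    (Ioo_subset_Icc_self hθ)
end

section
/- For every 0 < α ≤ 1 and every complex z with |z| ≤ 1, the real part of (1 - z)^α · (1 + α/2 - (α/2) z) is nonnegative, where (·)^α is the principal branch (with the convention that the value at z = 1 is 0). -/
/-!
Put `w = 1 - z`, `r = ‖w‖`, `θ = arg w`. Then `W = w ^ α * (1 + (α / 2) * w)` has real part
`r ^ α * (cos (θ α) + (α / 2) r cos (θ (α + 1)))`, and `‖1 - w‖ ≤ 1` forces `|θ| ≤ π / 2` and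
`r ≤ 2 cos θ`. When `cos (θ (α + 1)) < 0` the worst case is `r = 2 cos θ`, and there, with
`cos (θ α) ≥ cos θ` and `sin (θ α) ≤ sin θ`, the bracket is at least
`(1 - α) cos θ + 2 α cos³ θ ≥ 0`.
-/

open Complex

namespace Real

theorem cos_mul_add_mul_cos_mul_cos_mul_add_one_nonneg {φ α : ℝ} (hφ0 : 0 ≤ φ)
    (hφ : φ ≤ π / 2) (hα0 : 0 ≤ α) (hα1 : α ≤ 1) :
    0 ≤ cos (φ * α) + α * cos φ * cos (φ * (α + 1)) := by
  have hφα0 : 0 ≤ φ * α := mul_nonneg hφ0 hα0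
  have hφαφ : φ * α ≤ φ := mul_le_of_le_one_right hφ0 hα1
  have hc : 0 ≤ cos φ := cos_nonneg_of_mem_Icc ⟨by linarith [pi_pos], hφ⟩
  have hs : 0 ≤ sin φ := sin_nonneg_of_nonneg_of_le_pi hφ0 (by linarith [pi_pos])
  have hcos_le : cos φ ≤ cos (φ * α) :=
    cos_le_cos_of_nonneg_of_le_pi hφα0 (by linarith [pi_pos]) hφαφ
  have hsin_le : sin (φ * α) ≤ sin φ :=
    sin_le_sin_of_le_of_le_pi_div_two (by linarith [pi_pos]) hφ hφαφ
  rw [mul_add_one, cos_add]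
  nlinarith [sin_sq_add_cos_sq φ,
    mul_nonneg (sub_nonneg.2 hcos_le) (mul_nonneg hα0 (sq_nonneg (cos φ))),
    mul_nonneg (mul_nonneg hα0 hc) (mul_nonneg hs (sub_nonneg.2 hsin_le)),
    mul_nonneg hc (sub_nonneg.2 hα1), mul_nonneg hα0 (pow_nonneg hc 3)]

theorem cos_mul_add_mul_cos_mul_add_one_nonneg {θ α r : ℝ} (hθ : |θ| ≤ π / 2)
    (hα0 : 0 ≤ α) (hα1 : α ≤ 1) (hr0 : 0 ≤ r) (hr : r ≤ 2 * cos θ) :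
    0 ≤ cos (θ * α) + α / 2 * r * cos (θ * (α + 1)) := by
  have habs (β : ℝ) (hβ : 0 ≤ β) : cos (θ * β) = cos (|θ| * β) := by
    rw [← cos_abs (θ * β), abs_mul, abs_of_nonneg hβ]
  rw [habs α hα0, habs (α + 1) (by linarith), ← cos_abs θ] at *
  have hθα : |θ| * α ≤ π / 2 := by nlinarith [abs_nonneg θ]
  have hcos_α : 0 ≤ cos (|θ| * α) :=
    cos_nonneg_of_mem_Icc ⟨by nlinarith [abs_nonneg θ, pi_pos], hθα⟩
  rcases le_or_gt 0 (cos (|θ| * (α + 1))) with hpos | hneg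
  · positivity
  · have hr_worst : α * cos |θ| * cos (|θ| * (α + 1)) ≤ α / 2 * r * cos (|θ| * (α + 1)) :=
      mul_le_mul_of_nonpos_right (by nlinarith) hneg.le
    linarith [cos_mul_add_mul_cos_mul_cos_mul_add_one_nonneg (abs_nonneg θ) hθ hα0 hα1]

end Real

namespace Complex

theorem re_cpow_ofReal_mul_self (w : ℂ) (a : ℝ) :
    (w ^ (a : ℂ) * w).re = ‖w‖ ^ a * ‖w‖ * Real.cos (arg w * (a + 1)) := by
  rw [mul_re, cpow_ofReal_re, cpow_ofReal_im, ← norm_mul_cos_arg w, ← norm_mul_sin_arg w,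
    mul_add_one, Real.cos_add]
  ring

theorem re_cpow_ofReal_mul_one_add_mul (w : ℂ) (a b : ℝ) :
    (w ^ (a : ℂ) * (1 + b * w)).re =
      ‖w‖ ^ a * (Real.cos (arg w * a) + b * ‖w‖ * Real.cos (arg w * (a + 1))) := by
  rw [mul_one_add, mul_left_comm, add_re, re_ofReal_mul, re_cpow_ofReal_mul_self, cpow_ofReal_re]
  ring

theorem norm_le_two_mul_cos_arg_of_norm_one_sub_le_one {w : ℂ} (hw : ‖1 - w‖ ≤ 1) :
    ‖w‖ ≤ 2 * Real.cos (arg w) := by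
  rcases eq_or_ne w 0 with rfl | hw0
  · simp
  have hsq : ‖w‖ ^ 2 ≤ 2 * w.re := by
    have h : ‖1 - w‖ ^ 2 ≤ 1 := pow_le_one₀ (norm_nonneg _) hw
    simp only [Complex.sq_norm, normSq_apply, sub_re, one_re, sub_im, one_im] at h ⊢
    nlinarith
  rw [← norm_mul_cos_arg w, sq, mul_left_comm] at hsq
  exact le_of_mul_le_mul_left (by linarith) (norm_pos_iff.2 hw0)

end Complex

/-- The real part of W(z) = (1-z)^α (1 + α/2 - (α/2)z) is nonnegative on the
closed unit disk, for 0 < α ≤ 1 (principal branch, value 0 at z = 1). -/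
theorem W1_nonneg (α : ℝ) (hα0 : 0 < α) (hα1 : α ≤ 1) (z : ℂ) (hz : ‖z‖ ≤ 1) :
    0 ≤ ((1 - z) ^ (α : ℂ) * (1 + α / 2 - (α / 2) * z)).re := by
  set w := 1 - z with hw
  have hdisk : ‖1 - w‖ ≤ 1 := by rwa [hw, sub_sub_cancel]
  have hθ : |arg w| ≤ Real.pi / 2 :=
    abs_arg_le_pi_div_two_iff.2 (by simpa [hw] using (re_le_norm z).trans hz)
  have hfactor : (1 + α / 2 - (α / 2) * z : ℂ) = 1 + ((α / 2 : ℝ) : ℂ) * w := by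
    rw [hw]; push_cast; ring
  rw [hfactor, re_cpow_ofReal_mul_one_add_mul]
  exact mul_nonneg (Real.rpow_nonneg (norm_nonneg w) α)
    (Real.cos_mul_add_mul_cos_mul_add_one_nonneg hθ hα0.le hα1 (norm_nonneg w)
      (norm_le_two_mul_cos_arg_of_norm_one_sub_le_one hdisk))
end

section
/- Let 0 < α ≤ 1 and let λ, ρ, κ be real numbers with λ < 0, ρ ≤ 0, and κ > (λ - 3ρ)/4. Then for every complex z with |z| ≤ 1 and every real c > 0, one has (1 - z)^α (1 + α/2 - (α/2) z) ≠ c · (λ - κ + (ρ + κ)(2z - z²)), where (·)^α is the principal branch. -/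
/-!
Put `w = 1 - z`, which ranges over the closed disk `‖w - 1‖ ≤ 1`; the claim becomes
`w ^ α (1 + (α / 2) w) ≠ c (a - b w²)` with `a = λ + ρ < 0` and `a < 4 b`, `b = ρ + κ`.
Both sides commute with conjugation, so we may take `Im w ≥ 0`. In polar form `w = r e^{iθ}`
with `0 ≤ θ ≤ π/2` and `r ≤ 2 cos θ`, the left side is `r^α (e^{iαθ} + (α r / 2) e^{i(α+1)θ})`,
which lies in the closed first quadrant. The right side never does: for `b < 0` its real part is
at most `c (a - 4 b) < 0`, and for `b ≥ 0` its imaginary part `-2 c b Re w Im w` is negative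
unless `b Re w Im w = 0`, in which case its real part is negative.
-/

open Complex

open scoped Real ComplexConjugate

lemma Real.cos_add_mul_cos_add_nonneg {θ β t : ℝ} (hθ : θ ≤ π / 2) (hβ : 0 ≤ β) (hβθ : β ≤ θ)
    (ht : 0 ≤ t) (htθ : t ≤ Real.cos θ) : 0 ≤ Real.cos β + t * Real.cos (β + θ) := by
  have hθ0 : 0 ≤ θ := hβ.trans hβθ
  have hcosθ : 0 ≤ Real.cos θ := Real.cos_nonneg_of_mem_Icc ⟨by linarith [Real.pi_pos], hθ⟩
  have hcos : Real.cos θ ≤ Real.cos β :=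
    Real.cos_le_cos_of_nonneg_of_le_pi hβ (by linarith [Real.pi_pos]) hβθ
  rcases le_or_gt 0 (Real.cos (β + θ)) with h | h
  · nlinarith [mul_nonneg ht h]
  have hsinθ : 0 ≤ Real.sin θ :=
    Real.sin_nonneg_of_nonneg_of_le_pi hθ0 (by linarith [Real.pi_pos])
  have hsin : Real.sin β ≤ Real.sin θ :=
    Real.sin_le_sin_of_le_of_le_pi_div_two (by linarith [Real.pi_pos]) hθ hβθ
  -- `cos β (1 + cos² θ) - cos θ sin θ sin β` is smallest at `β = θ`, where it is `2 cos³ θ`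
  calc 0 ≤ 2 * Real.cos θ ^ 3 := by positivity
    _ ≤ Real.cos β + Real.cos θ * Real.cos (β + θ) := by
      rw [Real.cos_add]
      nlinarith [Real.sin_sq_add_cos_sq θ,
        mul_nonneg (sub_nonneg.2 hcos) (by positivity : (0 : ℝ) ≤ 1 + Real.cos θ ^ 2),
        mul_nonneg (mul_nonneg hcosθ hsinθ) (sub_nonneg.2 hsin)]
    _ ≤ Real.cos β + t * Real.cos (β + θ) := by nlinarith [mul_le_mul_of_nonpos_right htθ h.le]

namespace Complex

lemma re_nonneg_of_mem_closedBall_one {w : ℂ} (hw : w ∈ Metric.closedBall (1 : ℂ) 1) :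
    0 ≤ w.re := by
  rw [mem_closedBall_iff_norm] at hw
  have := (abs_re_le_norm (w - 1)).trans hw
  rw [sub_re, one_re, abs_le] at this
  linarith

lemma norm_le_two_mul_cos_arg_of_mem_closedBall_one {w : ℂ}
    (hw : w ∈ Metric.closedBall (1 : ℂ) 1) : ‖w‖ ≤ 2 * Real.cos (arg w) := by
  have harg := abs_le.1 (abs_arg_le_pi_div_two_iff.2 (re_nonneg_of_mem_closedBall_one hw))
  have hcos : 0 ≤ Real.cos (arg w) := Real.cos_nonneg_of_neg_pi_div_two_le_of_le harg.1 harg.2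
  rw [mem_closedBall_iff_norm] at hw
  have hsq : ‖w‖ ^ 2 ≤ 2 * (‖w‖ * Real.cos (arg w)) := by
    have h1 : ‖w - 1‖ ^ 2 ≤ 1 := by nlinarith [norm_nonneg (w - 1)]
    rw [norm_mul_cos_arg]
    rw [Complex.sq_norm, normSq_apply] at h1 ⊢
    simp only [sub_re, one_re, sub_im, one_im, sub_zero] at h1
    nlinarith
  nlinarith [norm_nonneg w]

lemma re_cpow_ofReal_mul_one_add (w : ℂ) (α s : ℝ) :
    (w ^ (α : ℂ) * (1 + s * w)).re =
      ‖w‖ ^ α * (Real.cos (arg w * α) + s * ‖w‖ * Real.cos (arg w * α + arg w)) := by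
  rw [mul_re, cpow_ofReal_re, cpow_ofReal_im, Real.cos_add]
  simp only [add_re, add_im, one_re, one_im, mul_re, mul_im, ofReal_re, ofReal_im,
    ← norm_mul_cos_arg w, ← norm_mul_sin_arg w]
  ring

lemma im_cpow_ofReal_mul_one_add (w : ℂ) (α s : ℝ) :
    (w ^ (α : ℂ) * (1 + s * w)).im =
      ‖w‖ ^ α * (Real.sin (arg w * α) + s * ‖w‖ * Real.sin (arg w * α + arg w)) := by
  rw [mul_im, cpow_ofReal_re, cpow_ofReal_im, Real.sin_add]
  simp only [add_re, add_im, one_re, one_im, mul_re, mul_im, ofReal_re, ofReal_im,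
    ← norm_mul_cos_arg w, ← norm_mul_sin_arg w]
  ring

lemma cpow_ofReal_mul_one_add_half_re_nonneg_and_im_nonneg {w : ℂ}
    (hw : w ∈ Metric.closedBall (1 : ℂ) 1) (hw_im : 0 ≤ w.im) {α : ℝ} (hα0 : 0 ≤ α)
    (hα1 : α ≤ 1) :
    0 ≤ (w ^ (α : ℂ) * (1 + (α / 2 : ℝ) * w)).re ∧
      0 ≤ (w ^ (α : ℂ) * (1 + (α / 2 : ℝ) * w)).im := by
  rw [re_cpow_ofReal_mul_one_add, im_cpow_ofReal_mul_one_add]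
  set θ := arg w
  have hθ0 : 0 ≤ θ := arg_nonneg_iff.2 hw_im
  have hθ : θ ≤ π / 2 :=
    (abs_le.1 (abs_arg_le_pi_div_two_iff.2 (re_nonneg_of_mem_closedBall_one hw))).2
  have hβ0 : 0 ≤ θ * α := mul_nonneg hθ0 hα0
  have hβθ : θ * α ≤ θ := mul_le_of_le_one_right hθ0 hα1
  have hr := norm_le_two_mul_cos_arg_of_mem_closedBall_one hw
  have ht0 : 0 ≤ α / 2 * ‖w‖ := by positivity
  have ht : α / 2 * ‖w‖ ≤ Real.cos θ := by nlinarith [norm_nonneg w]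
  have hπ := Real.pi_pos
  refine ⟨mul_nonneg (by positivity) (Real.cos_add_mul_cos_add_nonneg hθ hβ0 hβθ ht0 ht), ?_⟩
  have hsinβ : 0 ≤ Real.sin (θ * α) := Real.sin_nonneg_of_nonneg_of_le_pi hβ0 (by linarith)
  have hsin : 0 ≤ Real.sin (θ * α + θ) :=
    Real.sin_nonneg_of_nonneg_of_le_pi (by linarith) (by linarith)
  exact mul_nonneg (by positivity) (add_nonneg hsinβ (mul_nonneg ht0 hsin))

lemma re_sub_mul_sq_neg_or_im_neg {w : ℂ} (hw : w ∈ Metric.closedBall (1 : ℂ) 1)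
    (hw_im : 0 ≤ w.im) {a b : ℝ} (ha : a < 0) (hab : a < 4 * b) :
    (a - b * w ^ 2).re < 0 ∨ (a - b * w ^ 2).im < 0 := by
  have hre := re_nonneg_of_mem_closedBall_one hw
  rw [mem_closedBall_iff_norm, ← sq_le_one_iff₀ (norm_nonneg _), Complex.sq_norm,
    normSq_apply] at hw
  simp only [sub_re, one_re, sub_im, one_im, sub_zero] at hw
  simp only [sub_re, sub_im, ofReal_re, ofReal_im, mul_re, mul_im, sq, zero_mul, sub_zero,
    zero_sub, add_zero]
  rcases lt_or_ge b 0 with hb | hb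
  · have hre2 : w.re ≤ 2 := by nlinarith [sq_nonneg w.im]
    left
    nlinarith [mul_nonneg (neg_nonneg.2 hb.le) (mul_nonneg hre (sub_nonneg.2 hre2))]
  rcases (mul_nonneg hb (mul_nonneg hre hw_im)).eq_or_lt with h | h
  · left
    rcases mul_eq_zero.1 h.symm with hb0 | hri
    · simpa [hb0] using ha
    rcases mul_eq_zero.1 hri with hre0 | him0
    · have him0 : w.im = 0 := by nlinarith
      simpa [hre0, him0] using ha
    · rw [him0]
      nlinarith [mul_nonneg hb (mul_self_nonneg w.re)]
  · right
    nlinarith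

theorem cpow_ofReal_mul_one_add_half_ne_ofReal_mul {w : ℂ}
    (hw : w ∈ Metric.closedBall (1 : ℂ) 1) {α : ℝ} (hα0 : 0 ≤ α) (hα1 : α ≤ 1) {a b c : ℝ}
    (ha : a < 0) (hab : a < 4 * b) (hc : 0 < c) :
    w ^ (α : ℂ) * (1 + (α / 2 : ℝ) * w) ≠ c * (a - b * w ^ 2) := by
  wlog hw_im : 0 ≤ w.im generalizing w with H
  · intro h
    have hw' : conj w ∈ Metric.closedBall (1 : ℂ) 1 := by
      rwa [mem_closedBall_iff_norm, ← map_one conj, ← map_sub, RCLike.norm_conj,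
        ← mem_closedBall_iff_norm]
    have harg : arg w ≠ π := fun hπ =>
      (arg_eq_pi_iff.1 hπ).1.not_ge (re_nonneg_of_mem_closedBall_one hw)
    refine H hw' (by rw [conj_im]; linarith) ?_
    rw [conj_cpow _ _ harg, conj_ofReal]
    simpa [map_ofNat] using congrArg conj h
  intro h
  obtain ⟨hre, him⟩ := cpow_ofReal_mul_one_add_half_re_nonneg_and_im_nonneg hw hw_im hα0 hα1
  rw [h, re_ofReal_mul] at hre
  rw [h, im_ofReal_mul] at him
  rcases re_sub_mul_sq_neg_or_im_neg hw hw_im ha hab with hneg | hneg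
  · exact (mul_neg_of_pos_of_neg hc hneg).not_ge hre
  · exact (mul_neg_of_pos_of_neg hc hneg).not_ge him

end Complex

/-- Unconditional stability (p = q = 2): if λ < 0, ρ ≤ 0 and κ > (λ-3ρ)/4,
then (1-z)^α (1 + α/2 - (α/2)z) is never a positive real multiple of
λ - κ + (ρ+κ)(2z - z²) on the closed unit disk. -/
theorem uncond_stability_q2 (α lam ρ κ : ℝ) (hα0 : 0 < α) (hα1 : α ≤ 1)
    (hlam : lam < 0) (hρ : ρ ≤ 0) (hκ : κ > (lam - 3 * ρ) / 4)
    (z : ℂ) (hz : ‖z‖ ≤ 1) (c : ℝ) (hc : 0 < c) :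
    (1 - z) ^ (α : ℂ) * (1 + α / 2 - (α / 2) * z) ≠
      (c : ℂ) * ((lam : ℂ) - κ + (ρ + κ) * (2 * z - z ^ 2)) := by
  intro h
  have hw : 1 - z ∈ Metric.closedBall (1 : ℂ) 1 := by
    simpa [dist_eq_norm] using hz
  refine cpow_ofReal_mul_one_add_half_ne_ofReal_mul hw hα0.le hα1 (a := lam + ρ) (b := ρ + κ)
    (by linarith) (by linarith) hc ?_
  push_cast
  linear_combination h
end

section
/- Let 0 < α ≤ 1 and let λ, ρ, κ be real numbers with λ < 0, ρ ≤ 0, and κ > (λ - ρ)/2. Then for every complex z with |z| ≤ 1 and every real c > 0, one has (1 - z)^α ≠ c · ((λ + ρ) - (ρ + κ)(1 - z)), where (·)^α is the principal branch. -/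
/-!
Compare real parts. For `‖z‖ ≤ 1` the point `w = 1 - z` has `Re w ∈ [0, 2]`, so
`|arg w| ≤ π/2`, hence `|α arg w| ≤ π/2` and `Re (w ^ α) = |w| ^ α cos (α arg w) ≥ 0`. The real part of the right side is `c` times `(λ + ρ) - (ρ + κ) Re w`, which is affine in
`Re w` and negative at both ends `Re w = 0` (as `λ + ρ < 0`) and `Re w = 2` (as `λ - ρ < 2κ`).
-/

open Complex

theorem Complex.re_cpow_ofReal_nonneg {w : ℂ} {α : ℝ} (hα0 : 0 ≤ α) (hα1 : α ≤ 1)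
    (hw : 0 ≤ w.re) : 0 ≤ (w ^ (α : ℂ)).re := by
  have harg : |w.arg * α| ≤ Real.pi / 2 :=
    calc |w.arg * α| = |w.arg| * α := by rw [abs_mul, abs_of_nonneg hα0]
      _ ≤ |w.arg| := mul_le_of_le_one_right (abs_nonneg _) hα1
      _ ≤ Real.pi / 2 := abs_arg_le_pi_div_two_iff.mpr hw
  rw [cpow_ofReal_re]
  exact mul_nonneg (Real.rpow_nonneg (norm_nonneg _) _)
    (Real.cos_nonneg_of_mem_Icc (abs_le.mp harg))

theorem Complex.re_one_sub_mem_Icc_of_norm_le_one {z : ℂ} (hz : ‖z‖ ≤ 1) :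
    (1 - z).re ∈ Set.Icc 0 2 := by
  have := abs_le.mp ((abs_re_le_norm z).trans hz)
  simp only [sub_re, one_re, Set.mem_Icc]
  constructor <;> linarith

theorem sub_mul_neg_of_mem_Icc {a b t : ℝ} (ha : a < 0) (hab : a - 2 * b < 0)
    (ht : t ∈ Set.Icc 0 2) : a - b * t < 0 := by
  -- `a - b t = (1 - t/2) a + (t/2) (a - 2b)`
  obtain ⟨ht0, ht2⟩ := ht
  nlinarith [mul_nonneg (sub_nonneg.mpr ht2) (neg_nonneg.mpr ha.le),
    mul_nonneg ht0 (neg_nonneg.mpr hab.le)]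

/-- Unconditional stability (p = q = 1): if λ < 0, ρ ≤ 0 and κ > (λ-ρ)/2,
then (1-z)^α is never a positive real multiple of (λ+ρ) - (ρ+κ)(1-z)
on the closed unit disk. -/
theorem uncond_stability_q1 (α lam ρ κ : ℝ) (hα0 : 0 < α) (hα1 : α ≤ 1)
    (hlam : lam < 0) (hρ : ρ ≤ 0) (hκ : κ > (lam - ρ) / 2)
    (z : ℂ) (hz : ‖z‖ ≤ 1) (c : ℝ) (hc : 0 < c) :
    (1 - z) ^ (α : ℂ) ≠
      (c : ℂ) * (((lam : ℝ) + ρ : ℝ) - ((ρ : ℝ) + κ : ℝ) * (1 - z)) := by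
  intro heq
  have hw := re_one_sub_mem_Icc_of_norm_le_one hz
  have hlhs : 0 ≤ ((1 - z) ^ (α : ℂ)).re := re_cpow_ofReal_nonneg hα0.le hα1 hw.1
  have hrhs : ((c : ℂ) * (((lam + ρ : ℝ) : ℂ) - ((ρ + κ : ℝ) : ℂ) * (1 - z))).re < 0 := by
    rw [re_ofReal_mul, sub_re, ofReal_re, re_ofReal_mul]
    exact mul_neg_of_pos_of_neg hc
      (sub_mul_neg_of_mem_Icc (by linarith) (by linarith) hw)
  rw [heq] at hlhs
  exact hlhs.not_gt hrhs
end

section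
/- Let (Q_n)_{n≥0} and (H_n)_{n≥0} be sequences of complex numbers with Σ |Q_n| < ∞, Q(z) = Σ Q_n z^n ≠ 0 for all |z| ≤ 1, H_n → 0 as n → ∞, and sup_n |H_n| < ∞. Define (U_n) by the convolution equation Σ_{j=0}^n Q_{n-j} U_j = H_n for all n ≥ 0. Then U_n → 0 as n → ∞. -/
/-!
Wiener's lemma via Gelfand theory: if `q = (Q n)` were not invertible in the commutative Banach
algebra `ℓ¹(ℕ)` under the Cauchy product, some character `φ` would vanish at `q`. A character
evaluates power series at `z = φ X`, where `‖z‖ ≤ ‖X‖ = 1`, so `φ q = ∑ Q n z ^ n ≠ 0`.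
Hence `q` has an inverse `r ∈ ℓ¹(ℕ)`, the convolution equation says `U = r * H` as power
series, and the convolution of an absolutely summable sequence with a null sequence is null by
dominated convergence.
-/

open Filter Finset
open scoped Topology

noncomputable section

/-- `ℓ¹(ℕ, R)` with the Cauchy product: power series with absolutely summable coefficients. -/
def WienerAlgebra (R : Type*) [NormedAddCommGroup R] : Type _ := lp (fun _ : ℕ => R) 1

namespace WienerAlgebra

section Additive

variable {R : Type*} [NormedAddCommGroup R]

instance : NormedAddCommGroup (WienerAlgebra R) :=
  inferInstanceAs (NormedAddCommGroup (lp (fun _ : ℕ => R) 1))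

instance [CompleteSpace R] : CompleteSpace (WienerAlgebra R) :=
  inferInstanceAs (CompleteSpace (lp (fun _ : ℕ => R) 1))

instance : CoeFun (WienerAlgebra R) (fun _ => ℕ → R) :=
  ⟨fun (a : lp (fun _ : ℕ => R) 1) => ⇑a⟩

@[ext]
theorem ext {a b : WienerAlgebra R} (h : ∀ n, a n = b n) : a = b :=
  lp.ext (funext h)

@[simp] theorem coe_zero : ⇑(0 : WienerAlgebra R) = 0 := rfl
@[simp] theorem coe_add (a b : WienerAlgebra R) : ⇑(a + b) = a + b := rfl
@[simp] theorem coe_neg (a : WienerAlgebra R) : ⇑(-a) = -a := rfl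
@[simp] theorem coe_sub (a b : WienerAlgebra R) : ⇑(a - b) = a - b := rfl
@[simp] theorem coe_nsmul (n : ℕ) (a : WienerAlgebra R) : ⇑(n • a) = n • ⇑a := rfl
@[simp] theorem coe_zsmul (n : ℤ) (a : WienerAlgebra R) : ⇑(n • a) = n • ⇑a := rfl

theorem summable_norm (a : WienerAlgebra R) : Summable fun n => ‖a n‖ := by
  simpa using (memℓp_gen_iff (p := 1) (by simp)).1 (a : lp (fun _ : ℕ => R) 1).2

def ofSummable (f : ℕ → R) (hf : Summable fun n => ‖f n‖) : WienerAlgebra R :=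
  (⟨f, (memℓp_gen_iff (by simp)).2 (by simpa using hf)⟩ : lp (fun _ : ℕ => R) 1)

@[simp] theorem coe_ofSummable (f : ℕ → R) (hf : Summable fun n => ‖f n‖) :
    ⇑(ofSummable f hf) = f := rfl

theorem norm_eq_tsum_norm (a : WienerAlgebra R) : ‖a‖ = ∑' n, ‖a n‖ := by
  have := lp.norm_eq_tsum_rpow (p := 1) (by simp) (a : lp (fun _ : ℕ => R) 1)
  simp only [ENNReal.toReal_one, Real.rpow_one, div_one] at this
  exact this

def single (i : ℕ) (c : R) : WienerAlgebra R := lp.single 1 i c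

@[simp] theorem coe_single (i : ℕ) (c : R) : ⇑(single i c) = Pi.single i c := rfl

@[simp] theorem norm_single (i : ℕ) (c : R) : ‖single i c‖ = ‖c‖ :=
  lp.norm_single (E := fun _ : ℕ => R) (p := 1) zero_lt_one i c

theorem hasSum_single (a : WienerAlgebra R) : HasSum (fun n => single n (a n)) a :=
  lp.hasSum_single (E := fun _ : ℕ => R) (p := 1) ENNReal.one_ne_top a

variable {𝕜 : Type*} [NormedField 𝕜] [NormedSpace 𝕜 R]

instance : NormedSpace 𝕜 (WienerAlgebra R) :=
  inferInstanceAs (NormedSpace 𝕜 (lp (fun _ : ℕ => R) 1))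

@[simp] theorem coe_smul (c : 𝕜) (a : WienerAlgebra R) : ⇑(c • a) = c • ⇑a := rfl

end Additive

section Ring

variable {R : Type*} [NormedRing R]

instance : Mul (WienerAlgebra R) :=
  ⟨fun a b => ofSummable (fun n => ∑ p ∈ antidiagonal n, a p.1 * b p.2)
    (summable_norm_sum_mul_antidiagonal_of_summable_norm a.summable_norm b.summable_norm)⟩

theorem coe_mul (a b : WienerAlgebra R) (n : ℕ) :
    (a * b) n = ∑ p ∈ antidiagonal n, a p.1 * b p.2 := rfl

instance : One (WienerAlgebra R) := ⟨single 0 1⟩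
instance : NatCast (WienerAlgebra R) := ⟨fun n => single 0 n⟩
instance : IntCast (WienerAlgebra R) := ⟨fun n => single 0 n⟩
instance : Pow (WienerAlgebra R) ℕ := ⟨fun a n => npowRec n a⟩

theorem mk_coe_injective : Function.Injective fun a : WienerAlgebra R => PowerSeries.mk ⇑a :=
  fun a b h => ext fun n => by simpa using congrArg (PowerSeries.coeff n) h

theorem mk_coe_mul (a b : WienerAlgebra R) :
    PowerSeries.mk ⇑(a * b) = PowerSeries.mk ⇑a * PowerSeries.mk ⇑b := by
  ext n; simp [PowerSeries.coeff_mul, coe_mul]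

theorem mk_coe_single (i : ℕ) (c : R) :
    PowerSeries.mk ⇑(single i c) = PowerSeries.monomial i c := by
  ext n; simp [PowerSeries.coeff_monomial, Pi.single_apply]

theorem mk_coe_single_zero (c : R) : PowerSeries.mk ⇑(single 0 c) = PowerSeries.C c := by
  rw [mk_coe_single, PowerSeries.monomial_zero_eq_C_apply]

instance : Ring (WienerAlgebra R) :=
  mk_coe_injective.ring _ (by ext; simp) ((mk_coe_single_zero 1).trans (map_one _))
    (fun _ _ => by ext; simp) mk_coe_mul (fun _ => by ext; simp) (fun _ _ => by ext; simp)
    (fun _ _ => by ext; rw [map_nsmul]; simp) (fun _ _ => by ext; rw [map_zsmul]; simp)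
    (fun a n => by
      induction n with
      | zero => exact (mk_coe_single_zero 1).trans (map_one _)
      | succ k ih =>
        exact (mk_coe_mul (npowRec k a) a).trans (by rw [pow_succ, ← ih]; rfl))
    (fun n => (mk_coe_single_zero _).trans (map_natCast _ n))
    (fun n => (mk_coe_single_zero _).trans (map_intCast _ n))

protected theorem norm_mul_le (a b : WienerAlgebra R) : ‖a * b‖ ≤ ‖a‖ * ‖b‖ := by
  have ha : Summable fun n => ‖‖a n‖‖ := by simpa using a.summable_norm
  have hb : Summable fun n => ‖‖b n‖‖ := by simpa using b.summable_norm
  simp only [norm_eq_tsum_norm]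
  rw [tsum_mul_tsum_eq_tsum_sum_antidiagonal_of_summable_norm ha hb]
  refine Summable.tsum_le_tsum
    (fun n => by rw [coe_mul]; exact norm_sum_le_of_le _ fun p _ => norm_mul_le _ _)
    (a * b).summable_norm ?_
  exact summable_sum_mul_antidiagonal_of_summable_mul (f := fun n => ‖a n‖)
    (g := fun n => ‖b n‖) (summable_mul_of_summable_norm ha hb)

instance : NormedRing (WienerAlgebra R) :=
  { (inferInstance : NormedAddCommGroup (WienerAlgebra R)),
    (inferInstance : Ring (WienerAlgebra R)) with
    norm_mul_le := WienerAlgebra.norm_mul_le }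

def toPowerSeries : WienerAlgebra R →+* PowerSeries R where
  toFun a := PowerSeries.mk a
  map_one' := (mk_coe_single_zero 1).trans (map_one _)
  map_mul' := mk_coe_mul
  map_zero' := by ext; simp
  map_add' _ _ := by ext; simp

@[simp] theorem coeff_toPowerSeries (a : WienerAlgebra R) (n : ℕ) :
    PowerSeries.coeff n (toPowerSeries a) = a n := by
  simp [toPowerSeries]

theorem toPowerSeries_injective : Function.Injective (toPowerSeries (R := R)) :=
  mk_coe_injective

@[simp] theorem toPowerSeries_single (i : ℕ) (c : R) :
    toPowerSeries (single i c) = PowerSeries.monomial i c :=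
  mk_coe_single i c

instance [NormOneClass R] : NormOneClass (WienerAlgebra R) :=
  ⟨(norm_single 0 1).trans norm_one⟩

def X : WienerAlgebra R := single 1 1

theorem X_pow (n : ℕ) : (X : WienerAlgebra R) ^ n = single n 1 :=
  toPowerSeries_injective <| by simp [X, PowerSeries.X_pow_eq, ← PowerSeries.X_eq]

end Ring

instance {R : Type*} [NormedCommRing R] : NormedCommRing (WienerAlgebra R) :=
  { (inferInstance : NormedRing (WienerAlgebra R)) with
    mul_comm a b := toPowerSeries_injective <| by rw [map_mul, map_mul, mul_comm] }

section Algebra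

variable {𝕜 R : Type*} [NormedField 𝕜] [NormedRing R] [NormedAlgebra 𝕜 R]

instance : Algebra 𝕜 (WienerAlgebra R) :=
  Algebra.ofModule
    (fun c a b => ext fun n => by
      simp only [coe_mul, coe_smul, Pi.smul_apply, smul_sum, smul_mul_assoc])
    (fun c a b => ext fun n => by
      simp only [coe_mul, coe_smul, Pi.smul_apply, smul_sum, mul_smul_comm])

instance : NormedAlgebra 𝕜 (WienerAlgebra R) :=
  { norm_smul_le := norm_smul_le }

end Algebra

theorem single_eq_smul_X_pow {𝕜 : Type*} [NormedField 𝕜] (n : ℕ) (c : 𝕜) :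
    single n c = c • (X : WienerAlgebra 𝕜) ^ n :=
  ext fun m => by simp [X_pow, Pi.single_apply]

open WeakDual

theorem hasSum_character_apply (φ : characterSpace ℂ (WienerAlgebra ℂ))
    (a : WienerAlgebra ℂ) : HasSum (fun n => a n * φ X ^ n) (φ a) := by
  simpa [single_eq_smul_X_pow, Function.comp_def] using
    (hasSum_single a).map φ (map_continuous φ)

theorem norm_character_apply_X_le_one (φ : characterSpace ℂ (WienerAlgebra ℂ)) : ‖φ X‖ ≤ 1 :=
  (spectrum.norm_le_norm_of_mem (CharacterSpace.apply_mem_spectrum φ X)).trans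
    ((norm_single 1 1).trans norm_one).le

theorem isUnit_of_forall_tsum_ne_zero (a : WienerAlgebra ℂ)
    (ha : ∀ z : ℂ, ‖z‖ ≤ 1 → ∑' n, a n * z ^ n ≠ 0) : IsUnit a := by
  by_contra h
  obtain ⟨φ, hφ⟩ := CharacterSpace.exists_apply_eq_zero h
  exact ha _ (norm_character_apply_X_le_one φ) ((hasSum_character_apply φ a).tsum_eq.trans hφ)

end WienerAlgebra

end

theorem tendsto_sum_antidiagonal_mul_of_summable_norm {R : Type*} [NonUnitalSeminormedRing R]
    {a b : ℕ → R} (ha : Summable fun n => ‖a n‖) (hb : Tendsto b atTop (𝓝 0)) :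
    Tendsto (fun n => ∑ p ∈ antidiagonal n, a p.1 * b p.2) atTop (𝓝 0) := by
  obtain ⟨B, hB⟩ := hb.norm.bddAbove_range
  have hbB : ∀ n, ‖b n‖ ≤ B := fun n => hB ⟨n, rfl⟩
  let f : ℕ → ℕ → ℝ := fun n k => if k ≤ n then ‖a k‖ * ‖b (n - k)‖ else 0
  have hf : Tendsto (fun n => ∑' k, f n k) atTop (𝓝 0) := by
    have hlim : ∀ k, Tendsto (f · k) atTop (𝓝 0) := fun k => by
      have := ((hb.comp (tendsto_sub_atTop_nat k)).norm.const_mul ‖a k‖)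
      rw [norm_zero, mul_zero] at this
      exact this.congr' ((eventually_ge_atTop k).mono fun n hn => (if_pos hn).symm)
    have hle : ∀ n k, ‖f n k‖ ≤ ‖a k‖ * B := fun n k => by
      by_cases hk : k ≤ n
      · simpa [f, hk] using mul_le_mul_of_nonneg_left (hbB (n - k)) (norm_nonneg (a k))
      · simpa [f, hk] using mul_nonneg (norm_nonneg (a k)) ((norm_nonneg _).trans (hbB 0))
    simpa using tendsto_tsum_of_dominated_convergence (ha.mul_right B) hlim
      (Eventually.of_forall hle)
  refine squeeze_zero_norm (fun n => ?_) hf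
  calc ‖∑ p ∈ antidiagonal n, a p.1 * b p.2‖
      ≤ ∑ p ∈ antidiagonal n, ‖a p.1‖ * ‖b p.2‖ :=
        norm_sum_le_of_le _ fun p _ => norm_mul_le _ _
    _ = ∑ k ∈ range (n + 1), f n k := by
      rw [Nat.sum_antidiagonal_eq_sum_range_succ (fun i j => ‖a i‖ * ‖b j‖)]
      exact sum_congr rfl fun k hk => (if_pos (Nat.lt_succ_iff.1 (mem_range.1 hk))).symm
    _ = ∑' k, f n k :=
      (tsum_eq_sum fun k hk => if_neg fun h => hk (mem_range.2 (Nat.lt_succ_of_le h))).symm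

theorem wiener_stability_general (Q H U : ℕ → ℂ)
    (hQ : Summable fun n => ‖Q n‖)
    (hQ0 : ∀ z : ℂ, ‖z‖ ≤ 1 → (∑' n : ℕ, Q n * z ^ n) ≠ 0)
    (hH : Tendsto H atTop (nhds 0))
    (hconv : ∀ n : ℕ, ∑ j ∈ Finset.range (n + 1), Q (n - j) * U j = H n) :
    Tendsto U atTop (nhds 0) := by
  set q := WienerAlgebra.ofSummable Q hQ
  obtain ⟨r, hrq⟩ := (WienerAlgebra.isUnit_of_forall_tsum_ne_zero q hQ0).exists_left_inv
  have hQU : q.toPowerSeries * PowerSeries.mk U = PowerSeries.mk H := by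
    ext n
    rw [PowerSeries.coeff_mul, ← Nat.sum_antidiagonal_swap]
    simp only [Prod.fst_swap, Prod.snd_swap, WienerAlgebra.coeff_toPowerSeries, q,
      WienerAlgebra.coe_ofSummable, PowerSeries.coeff_mk]
    exact (Nat.sum_antidiagonal_eq_sum_range_succ (fun i j => Q j * U i) n).trans (hconv n)
  have hU : PowerSeries.mk U = r.toPowerSeries * PowerSeries.mk H := by
    rw [← hQU, ← mul_assoc, ← map_mul, hrq, map_one, one_mul]
  have hUr : U = fun n => ∑ p ∈ antidiagonal n, r p.1 * H p.2 :=
    funext fun n => by simpa [PowerSeries.coeff_mul] using congrArg (PowerSeries.coeff n) hU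
  exact hUr ▸ tendsto_sum_antidiagonal_mul_of_summable_norm r.summable_norm hH

/-- Wiener-type stability lemma: if Q has absolutely summable coefficients
and no zero of its power series on the closed unit disk, H_n → 0 is bounded,
and Σ_{j=0}^n Q_{n-j} U_j = H_n, then U_n → 0. -/
theorem wiener_stability (Q H U : ℕ → ℂ)
    (hQ : Summable fun n => ‖Q n‖)
    (hQ0 : ∀ z : ℂ, ‖z‖ ≤ 1 → (∑' n : ℕ, Q n * z ^ n) ≠ 0)
    (hH : Tendsto H atTop (nhds 0))
    (hHb : ∃ B : ℝ, ∀ n, ‖H n‖ ≤ B)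
    (hconv : ∀ n : ℕ, ∑ j ∈ Finset.range (n + 1), Q (n - j) * U j = H n) :
    Tendsto U atTop (nhds 0) :=
  wiener_stability_general Q H U hQ hQ0 hH hconv
end
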